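/- arXiv:1301.0672 — 2 statements merged into one kernel-verified Lean document; each statement's English description precedes it below -/
import Mathlib

section
/- Let G₁, …, G_k be functions from subsets of X to a commutative ring, let ω ⊆ X and let Θ be a finite subset of X. Then D_Θ(G₁ ⋯ G_k)(ω) = Σ D_{Θ₁} G₁(ω) ⋯ D_{Θ_k} G_k(ω), where the sum runs over all k-tuples (Θ₁, …, Θ_k) of (possibly empty) subsets of Θ whose union Θ₁ ∪ ⋯ ∪ Θ_k equals Θ. -/
/-!
Summing both sides over the subsets `T ⊆ Θ` gives the same value. On the left, the inversion
formula `Σ_{η ⊆ T} D_η F(ω) = F(ω ∪ T)` yields `∏ G_i(ω ∪ T)`. On the right, grouping the tuples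
`(Θ_1, …, Θ_k)` of subsets of `T` by their union leaves the sum over all such tuples, which
factors as `∏_i Σ_{η ⊆ T} D_η G_i(ω) = ∏ G_i(ω ∪ T)`. A function on the subsets of `Θ` is
determined by its sums over subsets (Möbius inversion on the Boolean lattice), so the two sides
agree.
-/

/-- The iterated difference operator
`D_Θ F(ω) := Σ_{η ⊆ Θ} (-1)^{|Θ| - |η|} F(ω ∪ η)`, with values in a commutative ring. -/
def DTheta {X : Type*} {R : Type*} [CommRing R] [DecidableEq X]
    (Θ : Finset X) (F : Set X → R) (ω : Set X) : R :=
  ∑ η ∈ Θ.powerset, (-1 : R) ^ (Θ.card - η.card) * F (ω ∪ ↑η)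

open Finset

namespace Finset

variable {α ι M : Type*} [DecidableEq α]

theorem eq_of_forall_sum_powerset_eq [AddCancelCommMonoid M] {f g : Finset α → M}
    (Θ : Finset α) (h : ∀ T ⊆ Θ, ∑ S ∈ T.powerset, f S = ∑ S ∈ T.powerset, g S) :
    f Θ = g Θ := by
  induction Θ using Finset.strongInduction with
  | _ Θ ih =>
  have htail : ∑ S ∈ Θ.powerset.erase Θ, f S = ∑ S ∈ Θ.powerset.erase Θ, g S := by
    refine sum_congr rfl fun S hS => ?_
    obtain ⟨hne, hsub⟩ := mem_erase.1 hS
    have hsub := mem_powerset.1 hsub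
    exact ih S (hsub.ssubset_of_ne hne) fun T hT => h T (hT.trans hsub)
  have hΘ := h Θ subset_rfl
  rw [← add_sum_erase _ _ (mem_powerset_self Θ), ← add_sum_erase _ _ (mem_powerset_self Θ),
    htail] at hΘ
  exact add_right_cancel hΘ

variable [Fintype ι] [DecidableEq ι]

theorem filter_piFinset_powerset_sup_eq {S T : Finset α} (hST : S ⊆ T) :
    {c ∈ Fintype.piFinset fun _ : ι => T.powerset | univ.sup c = S}
      = {c ∈ Fintype.piFinset fun _ : ι => S.powerset | univ.sup c = S} := by
  ext c
  simp only [mem_filter, Fintype.mem_piFinset, mem_powerset, and_congr_left_iff]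
  rintro rfl
  have hle : ∀ i, c i ⊆ univ.sup c := fun i => le_sup (mem_univ i)
  exact ⟨fun _ => hle, fun _ i => (hle i).trans hST⟩

theorem sum_powerset_sum_filter_sup_eq [AddCommMonoid M] (T : Finset α)
    (f : (ι → Finset α) → M) :
    ∑ S ∈ T.powerset, ∑ c ∈ Fintype.piFinset (fun _ : ι => S.powerset) with univ.sup c = S, f c
      = ∑ c ∈ Fintype.piFinset fun _ : ι => T.powerset, f c := by
  have hmaps : ∀ c ∈ Fintype.piFinset fun _ : ι => T.powerset, univ.sup c ∈ T.powerset :=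
    fun c hc => mem_powerset.2 <|
      Finset.sup_le fun i _ => mem_powerset.1 (Fintype.mem_piFinset.1 hc i)
  rw [← sum_fiberwise_of_maps_to hmaps]
  exact sum_congr rfl fun S hS => by rw [filter_piFinset_powerset_sup_eq (mem_powerset.1 hS)]

end Finset

section DTheta

variable {X R : Type*} [CommRing R] [DecidableEq X]

theorem DTheta_insert {Θ : Finset X} {x : X} (hx : x ∉ Θ) (F : Set X → R) (ω : Set X) :
    DTheta (insert x Θ) F ω = DTheta Θ (fun ω' => F (ω' ∪ {x})) ω - DTheta Θ F ω := by
  have hsign : ∀ η ∈ Θ.powerset, (-1 : R) ^ (#Θ + 1 - #η) = -(-1) ^ (#Θ - #η) :=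
    fun η hη => by
      rw [Nat.sub_add_comm (card_le_card (mem_powerset.1 hη)), pow_succ, mul_neg_one]
  have hinsert : ∀ η ∈ Θ.powerset,
      (-1 : R) ^ (#Θ + 1 - #(insert x η)) * F (ω ∪ ↑(insert x η))
        = (-1) ^ (#Θ - #η) * F (ω ∪ ↑η ∪ {x}) := fun η hη => by
    have hxη : x ∉ η := fun h => hx (mem_powerset.1 hη h)
    rw [card_insert_of_notMem hxη, Nat.add_sub_add_right, coe_insert, Set.union_insert,
      Set.union_singleton]
  simp only [DTheta]
  rw [sum_powerset_insert hx, card_insert_of_notMem hx, sum_congr rfl hinsert,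
    sum_congr rfl fun η hη => by rw [hsign η hη]]
  simp only [neg_mul, sum_neg_distrib]
  abel

theorem sum_powerset_DTheta (Θ : Finset X) (F : Set X → R) (ω : Set X) :
    ∑ η ∈ Θ.powerset, DTheta η F ω = F (ω ∪ ↑Θ) := by
  induction Θ using Finset.induction_on generalizing F with
  | empty => simp [DTheta]
  | @insert x Θ hx ih =>
    rw [sum_powerset_insert hx,
      sum_congr rfl fun η hη => DTheta_insert (fun h => hx (mem_powerset.1 hη h)) F ω,
      sum_sub_distrib, ih, ih, coe_insert, Set.union_insert, Set.union_singleton]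
    abel

end DTheta

/-- Product rule:
`D_Θ (G₁ ⋯ G_k)(ω) = Σ D_{Θ₁} G₁(ω) ⋯ D_{Θ_k} G_k(ω)`, the sum running over all
`k`-tuples `(Θ₁, …, Θ_k)` of (possibly empty) subsets of `Θ` whose union is `Θ`. -/
theorem DTheta_prod {X : Type*} {R : Type*} [CommRing R] [DecidableEq X]
    (k : ℕ) (G : Fin k → Set X → R) (Θ : Finset X) (ω : Set X) :
    DTheta Θ (fun ω' => ∏ i, G i ω') ω
      = ∑ c ∈ (Fintype.piFinset fun _ : Fin k => Θ.powerset).filter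
            (fun c => Finset.univ.sup c = Θ),
          ∏ i, DTheta (c i) (G i) ω := by
  refine eq_of_forall_sum_powerset_eq (f := fun T => DTheta T (fun ω' => ∏ i, G i ω') ω)
    (g := fun T => ∑ c ∈ Fintype.piFinset (fun _ : Fin k => T.powerset) with univ.sup c = T,
      ∏ i, DTheta (c i) (G i) ω) Θ fun T _ => ?_
  rw [sum_powerset_DTheta, sum_powerset_sum_filter_sup_eq,
    sum_prod_piFinset T.powerset fun i η => DTheta η (G i) ω]
  exact prod_congr rfl fun i _ => (sum_powerset_DTheta T (G i) ω).symm
end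

section
/- For every k ≥ 0, every finite configuration ω ⊆ ℝ^d, and every point x ∈ ℝ^d not belonging to the convex hull of ω, one has τ^{(k)}(x, ω) = f^{∘k}(x), the k-fold iterate of f applied to x. -/
/-!
A point `x` outside `conv ω` lies outside `conv ω_e ⊆ conv ω`, so `τ̂` fixes it and `τ(x,ω) = f x`.
Every point of `ω` is moved by `τ̂` within `conv ω`, so `conv (τ_* ω) ⊆ f (conv ω)` because
`f (conv ω)` is convex; as `f` is injective, `f x` is outside `conv (τ_* ω)` and the argument repeats.
-/

noncomputable section

/-- `ℝ^d` with the Euclidean norm. -/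
abbrev Rd (d : ℕ) := EuclideanSpace ℝ (Fin d)

/-- The induced transformation `τ_*` on configurations: `τ_* ω = {τ(x,ω) : x ∈ ω}`. -/
def tauStar {X : Type*} (τ : X → Set X → X) (ω : Set X) : Set X :=
  (fun x => τ x ω) '' ω

/-- The iterates `τ^{(n)}`: `τ^{(0)}(x,ω) = x`,
`τ^{(n)}(x,ω) = τ^{(n-1)}(τ(x,ω), τ_* ω)`. -/
def tauIter {X : Type*} (τ : X → Set X → X) : ℕ → X → Set X → X
  | 0, x, _ => x
  | n + 1, x, ω => tauIter τ n (τ x ω) (tauStar τ ω)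

/-- The set `ω_e` of extreme points of the convex hull of the configuration `ω`. -/
def extPts {d : ℕ} (ω : Set (Rd d)) : Set (Rd d) :=
  (convexHull ℝ ω).extremePoints ℝ

theorem tauIter_eq_iterate_of_invariant {X : Type*} (τ : X → Set X → X) (f : X → X)
    (P : X → Set X → Prop) (hP : ∀ x ω, P x ω → τ x ω = f x ∧ P (f x) (tauStar τ ω)) :
    ∀ (k : ℕ) (x : X) (ω : Set X), P x ω → tauIter τ k x ω = f^[k] x
  | 0, _, _, _ => rfl
  | k + 1, x, ω, hx => by
    obtain ⟨hτ, hfx⟩ := hP x ω hx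
    rw [tauIter, hτ, tauIter_eq_iterate_of_invariant τ f P hP k _ _ hfx,
      Function.iterate_succ_apply]

theorem convexHull_image_comp_subset_image_convexHull {E F : Type*}
    [AddCommGroup E] [Module ℝ E] [AddCommGroup F] [Module ℝ F]
    {f : E → F} (hf : ∀ s : Set E, Convex ℝ s → Convex ℝ (f '' s)) {g : E → E} {s : Set E}
    (hg : ∀ y ∈ s, g y ∈ convexHull ℝ s) :
    convexHull ℝ ((fun y => f (g y)) '' s) ⊆ f '' convexHull ℝ s :=
  convexHull_min (by rintro _ ⟨y, hy, rfl⟩; exact ⟨g y, hg y hy, rfl⟩)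
    (hf _ (convex_convexHull ℝ s))

theorem convexHull_extPts_subset {d : ℕ} (ω : Set (Rd d)) :
    convexHull ℝ (extPts ω) ⊆ convexHull ℝ ω :=
  convexHull_min extremePoints_subset (convex_convexHull ℝ ω)

section TauHat

variable {d : ℕ} {τhat : Rd d → Set (Rd d) → Rd d} {ω : Set (Rd d)}

theorem tauHat_eq_self_of_not_mem_convexHull
    (h_out : ∀ (x : Rd d) (ω : Set (Rd d)), ω.Finite →
      x ∉ interior (convexHull ℝ (extPts ω)) → τhat x ω = x)
    (hω : ω.Finite) {x : Rd d} (hx : x ∉ convexHull ℝ ω) : τhat x ω = x :=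
  h_out x ω hω fun h => hx (convexHull_extPts_subset ω (interior_subset h))

theorem tauHat_mem_convexHull
    (h_in : ∀ (x : Rd d) (ω : Set (Rd d)), ω.Finite →
      x ∈ interior (convexHull ℝ (extPts ω)) →
      τhat x ω ∈ interior (convexHull ℝ (extPts ω)))
    (h_out : ∀ (x : Rd d) (ω : Set (Rd d)), ω.Finite →
      x ∉ interior (convexHull ℝ (extPts ω)) → τhat x ω = x)
    (hω : ω.Finite) {y : Rd d} (hy : y ∈ ω) : τhat y ω ∈ convexHull ℝ ω := by
  by_cases h : y ∈ interior (convexHull ℝ (extPts ω))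
  · exact convexHull_extPts_subset ω (interior_subset (h_in y ω hω h))
  · rw [h_out y ω hω h]
    exact subset_convexHull ℝ ω hy

end TauHat

theorem tauIter_outside_convexHull_general (d : ℕ)
    (f : Rd d → Rd d) (hf_bij : Function.Bijective f)
    (hf_conv : ∀ s : Set (Rd d), Convex ℝ s → Convex ℝ (f '' s))
    (τhat : Rd d → Set (Rd d) → Rd d)
    (h_in : ∀ (x : Rd d) (ω : Set (Rd d)), ω.Finite →
      x ∈ interior (convexHull ℝ (extPts ω)) →
      τhat x ω ∈ interior (convexHull ℝ (extPts ω)))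
    (h_out : ∀ (x : Rd d) (ω : Set (Rd d)), ω.Finite →
      x ∉ interior (convexHull ℝ (extPts ω)) → τhat x ω = x)
    (k : ℕ) (ω : Set (Rd d)) (hω : ω.Finite) (x : Rd d) (hx : x ∉ convexHull ℝ ω) :
    tauIter (fun y ω' => f (τhat y ω')) k x ω = f^[k] x := by
  refine tauIter_eq_iterate_of_invariant _ f (fun x ω => ω.Finite ∧ x ∉ convexHull ℝ ω)
    ?_ k x ω ⟨hω, hx⟩
  rintro x ω ⟨hω, hx⟩
  refine ⟨by rw [tauHat_eq_self_of_not_mem_convexHull h_out hω hx], hω.image _, fun hfx => ?_⟩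
  obtain ⟨z, hz, hfz⟩ := convexHull_image_comp_subset_image_convexHull hf_conv
    (fun y hy => tauHat_mem_convexHull h_in h_out hω hy) hfx
  exact hx (hf_bij.1 hfz ▸ hz)

/-- If `x` is outside the convex hull of the finite configuration `ω`, then
`τ^{(k)}(x,ω) = f^{∘k}(x)` for every `k ≥ 0`. -/
theorem tauIter_outside_convexHull (d : ℕ) (hd : 1 ≤ d)
    (f : Rd d → Rd d) (hf_bij : Function.Bijective f)
    (hf_conv : ∀ s : Set (Rd d), Convex ℝ s → Convex ℝ (f '' s))
    (τhat : Rd d → Set (Rd d) → Rd d)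
    (h_ext : ∀ (x : Rd d) (ω : Set (Rd d)), ω.Finite → τhat x ω = τhat x (extPts ω))
    (h_in : ∀ (x : Rd d) (ω : Set (Rd d)), ω.Finite →
      x ∈ interior (convexHull ℝ (extPts ω)) →
      τhat x ω ∈ interior (convexHull ℝ (extPts ω)))
    (h_out : ∀ (x : Rd d) (ω : Set (Rd d)), ω.Finite →
      x ∉ interior (convexHull ℝ (extPts ω)) → τhat x ω = x)
    (k : ℕ) (ω : Set (Rd d)) (hω : ω.Finite) (x : Rd d) (hx : x ∉ convexHull ℝ ω) :
    tauIter (fun y ω' => f (τhat y ω')) k x ω = f^[k] x :=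
  tauIter_outside_convexHull_general d f hf_bij hf_conv τhat h_in h_out k ω hω x hx
end
end
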